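/- The PF-D0 coefficient function b2 satisfies lim_{v→0⁺} b2(v) = −114798419/26611200 and lim_{v→0⁺} (b2(v) − (−114798419/26611200))/v² = 16301796103/29059430400; in particular b2 tends to the corresponding coefficient of the classical Quinlan–Tremaine method as v → 0. -/

import Mathlib

open Filter

/-- The variable coefficient `b₁(v)` of the phase-fitted method PF-D0. -/
noncomputable def pfb1 (v : ℝ) : ℝ :=
  (((-124184636) * Real.cos v + 70378348 * Real.cos (2 * v) - 24862148 * Real.cos (3 * v)
        + 5153611 * Real.cos (4 * v)) * v ^ 2
      + 25 * (3013169 * v ^ 2 - 16128 * Real.cos (3 * v) + 32256 * Real.cos (4 * v)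
        - 32256 * Real.cos (5 * v) + 16128 * Real.cos (6 * v)))
    / (206438400 * v ^ 2 * (Real.sin (v / 2)) ^ 10)

/-- The variable coefficient `b₂(v)` of the phase-fitted method PF-D0. -/
noncomputable def pfb2 (v : ℝ) : ℝ :=
  (v ^ 2 * (159588050 * Real.cos v - 85350160 * Real.cos (2 * v)
        + 16708985 * Real.cos (3 * v) - 5153611 * Real.cos (5 * v))
      - 16 * (6496079 * v ^ 2 - 252000 * Real.cos (3 * v) + 504000 * Real.cos (4 * v)
        - 504000 * Real.cos (5 * v) + 252000 * Real.cos (6 * v)))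
    / (206438400 * v ^ 2 * (Real.sin (v / 2)) ^ 10)

/-- The variable coefficient `b₃(v)` of the phase-fitted method PF-D0. -/
noncomputable def pfb3 (v : ℝ) : ℝ :=
  (((-367257540) * Real.cos v + 183567900 * Real.cos (2 * v)
        - 16708985 * Real.cos (4 * v) + 24862148 * Real.cos (5 * v)) * v ^ 2
      + 81 * (3175117 * v ^ 2 - 224000 * Real.cos (3 * v) + 448000 * Real.cos (4 * v)
        - 448000 * Real.cos (5 * v) + 224000 * Real.cos (6 * v)))
    / (206438400 * v ^ 2 * (Real.sin (v / 2)) ^ 10)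

/-- The variable coefficient `b₄(v)` of the phase-fitted method PF-D0. -/
noncomputable def pfb4 (v : ℝ) : ℝ :=
  (30675810 * v ^ 2 * Real.cos v - 42958788 * v ^ 2
      + 75 * (161280 - 611893 * v ^ 2) * Real.cos (3 * v)
      + 140 * (152411 * v ^ 2 - 172800) * Real.cos (4 * v)
      + (24192000 - 17594587 * v ^ 2) * Real.cos (5 * v)
      - 12096000 * Real.cos (6 * v))
    / (51609600 * v ^ 2 * (Real.sin (v / 2)) ^ 10)

/-- The variable coefficient `b₅(v)` of the phase-fitted method PF-D0. -/
noncomputable def pfb5 (v : ℝ) : ℝ :=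
  ((-61351620) * v ^ 2 * Real.cos (2 * v) + 85936557 * v ^ 2
      + 30 * (6120959 * v ^ 2 - 1411200) * Real.cos (3 * v)
      + 25 * (3386880 - 3191761 * v ^ 2) * Real.cos (4 * v)
      + (62092318 * v ^ 2 - 84672000) * Real.cos (5 * v)
      + 42336000 * Real.cos (6 * v))
    / (103219200 * v ^ 2 * (Real.sin (v / 2)) ^ 10)

/-- The variable coefficient `b₆(v)` of the phase-fitted method PF-D0. -/
noncomputable def pfb6 (v : ℝ) : ℝ :=
  (((-171873114) * Real.cos v + 171835152 * Real.cos (2 * v)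
        - 257184477 * Real.cos (3 * v) + 103937264 * Real.cos (4 * v)
        - 75329225 * Real.cos (5 * v)) * v ^ 2
      + 50803200 * (Real.cos (3 * v) - 2 * Real.cos (4 * v)
        + 2 * Real.cos (5 * v) - Real.cos (6 * v)))
    / (103219200 * v ^ 2 * (Real.sin (v / 2)) ^ 10)

/-!
With `x = v²` and `w = 1 - cos v`, expanding each `cos (k v)` in powers of `cos v` gives
`pfb2 v - b₂ = (x P(w) + Q(w)) / (6451200 x w⁵)` for explicit polynomials `P`, `Q`. If `w` is
replaced by its Taylor polynomial `ω(x)` of degree 6, then `x P(ω) + Q(ω) = x⁷ S(x)` exactly.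
The true `w` differs from `ω(x)` by `x⁷ T` with `T → 1/14!`, and this error enters only through
the slopes of `P` and `Q` between `ω(x)` and `w`, which tend to `P'(0)` and `Q'(0)`. Hence
`(x P(w) + Q(w)) / x⁷ → S(0) + Q'(0)/14!`, and `w / x → 1/2` gives the limits.
-/

open Topology Finset Nat Polynomial Real

theorem HasStrictDerivAt.tendsto_slope_comp {𝕜 E α : Type*} [NontriviallyNormedField 𝕜]
    [NormedAddCommGroup E] [NormedSpace 𝕜 E] {f : 𝕜 → E} {f' : E} {a : 𝕜}
    (hf : HasStrictDerivAt f f' a) {l : Filter α} {u v : α → 𝕜}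
    (hu : Tendsto u l (𝓝 a)) (hv : Tendsto v l (𝓝 a)) (huv : ∀ᶠ t in l, u t ≠ v t) :
    Tendsto (fun t => slope f (u t) (v t)) l (𝓝 f') := by
  have ho := hf.hasStrictFDerivAt.isLittleO.comp_tendsto (hv.prodMk_nhds hu)
  rw [← tendsto_sub_nhds_zero_iff]
  refine ho.tendsto_inv_smul_nhds_zero.congr' ?_
  filter_upwards [huv] with t ht
  simp [slope_def_module, smul_sub, inv_smul_smul₀ (sub_ne_zero.2 ht.symm)]

theorem tendsto_cos_sub_taylor_div_pow (n : ℕ) :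
    Tendsto (fun x => (cos x - ∑ k ∈ range n, (-1) ^ k * x ^ (2 * k) / (2 * k)!) / x ^ (2 * n))
      (𝓝[≠] 0) (𝓝 ((-1) ^ n / (2 * n)!)) := by
  set g : ℝ → ℝ := fun x => ∑' k, (-1) ^ (k + n) * x ^ (2 * k) / (2 * (k + n))!
  have hg : ∀ x ≠ 0,
      (cos x - ∑ k ∈ range n, (-1) ^ k * x ^ (2 * k) / (2 * k)!) / x ^ (2 * n) = g x := by
    intro x hx
    rw [div_eq_iff (by positivity), ← (hasSum_cos x).tsum_eq,
      ← (hasSum_cos x).summable.sum_add_tsum_nat_add n, add_sub_cancel_left, mul_comm,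
      ← tsum_mul_left]
    congr 1 with k
    rw [mul_add, pow_add]
    ring
  have hcont : ContinuousAt g 0 := by
    refine (continuousOn_tsum (s := Set.Icc (-1) 1) (u := fun k => 1 / k !) (fun k => by fun_prop)
      (by simpa using summable_pow_div_factorial 1) ?_).continuousAt
      (Icc_mem_nhds (by norm_num) (by norm_num))
    intro k x hx
    rw [norm_div, norm_mul, norm_pow, norm_pow, norm_neg, norm_one, one_pow, one_mul,
      norm_natCast]
    have hx1 : ‖x‖ ^ (2 * k) ≤ 1 := pow_le_one₀ (norm_nonneg x) (by simpa [abs_le] using hx)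
    calc ‖x‖ ^ (2 * k) / (2 * (k + n))! ≤ 1 / (2 * (k + n))! := by gcongr
      _ ≤ 1 / k ! := by gcongr; omega
  have hg0 : g 0 = (-1) ^ n / (2 * n)! := by
    simp only [g]
    rw [tsum_eq_single 0 (fun k hk => by simp [hk])]
    simp
  rw [← hg0]
  exact (hcont.tendsto.mono_left nhdsWithin_le_nhds).congr'
    (eventually_nhdsWithin_of_forall fun x hx => (hg x hx).symm)

theorem tendsto_one_sub_cos_div_sq :
    Tendsto (fun x => (1 - cos x) / x ^ 2) (𝓝[≠] 0) (𝓝 (1 / 2)) := by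
  convert (tendsto_cos_sub_taylor_div_pow 1).neg using 1
  · ext x
    simp only [range_one, sum_singleton]
    ring
  · norm_num

theorem cos_mul_recurrence (n θ : ℝ) :
    cos ((n + 2) * θ) = 2 * cos θ * cos ((n + 1) * θ) - cos (n * θ) := by
  have h₁ := cos_add ((n + 1) * θ) θ
  have h₂ := cos_sub ((n + 1) * θ) θ
  rw [show (n + 1) * θ + θ = (n + 2) * θ by ring] at h₁
  rw [show (n + 1) * θ - θ = n * θ by ring] at h₂
  linarith

-- The top coefficient of `pfb2P` absorbs the shift by `b₂`: `6451200 * b₂ = -114798419 * 8 / 33`.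
noncomputable def pfb2P : ℝ[X] :=
  C (-18144000) + C 160272000 * X - C 485553600 * X ^ 2 + C 654669600 * X ^ 3
    - C 412288880 * X ^ 4 + C (3639493960 / 33) * X ^ 5

noncomputable def pfb2Q : ℝ[X] :=
  C 36288000 * X - C 314496000 * X ^ 2 + C 919296000 * X ^ 3 - C 1161216000 * X ^ 4
    + C 645120000 * X ^ 5 - C 129024000 * X ^ 6

theorem pfb2_add_eq {v : ℝ} (hv : cos v ≠ 1) :
    pfb2 v + 114798419 / 26611200 =
      (v ^ 2 * pfb2P.eval (1 - cos v) + pfb2Q.eval (1 - cos v)) /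
        (6451200 * v ^ 2 * (1 - cos v) ^ 5) := by
  have hv0 : v ≠ 0 := by rintro rfl; simp at hv
  have hw : 1 - cos v ≠ 0 := sub_ne_zero.2 (Ne.symm hv)
  have hsin : sin (v / 2) ^ 2 = (1 - cos v) / 2 := by
    rw [sin_sq_eq_half_sub, show 2 * (v / 2) = v by ring]; ring
  have h2 := cos_mul_recurrence 0 v
  have h3 := cos_mul_recurrence 1 v
  have h4 := cos_mul_recurrence 2 v
  have h5 := cos_mul_recurrence 3 v
  have h6 := cos_mul_recurrence 4 v
  norm_num at h2 h3 h4 h5 h6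
  rw [pfb2, show sin (v / 2) ^ 10 = (sin (v / 2) ^ 2) ^ 5 by ring, hsin, h6, h5, h4, h3, h2]
  simp only [pfb2P, pfb2Q, eval_add, eval_sub, eval_mul, eval_C, eval_X, eval_pow]
  field_simp
  ring

noncomputable def oneSubCosTaylor (x : ℝ) : ℝ :=
  x / 2 - x ^ 2 / 24 + x ^ 3 / 720 - x ^ 4 / 40320 + x ^ 5 / 3628800 - x ^ 6 / 479001600

theorem oneSubCosTaylor_sq (v : ℝ) :
    oneSubCosTaylor (v ^ 2) = 1 - ∑ k ∈ range 7, (-1) ^ k * v ^ (2 * k) / (2 * k)! := by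
  simp only [oneSubCosTaylor, sum_range_succ, sum_range_zero, Nat.factorial]
  norm_num
  ring

noncomputable def pfb2Quot (x : ℝ) : ℝ :=
  1253984311/11088 + x * ((-3599296651/66528) + x * (49556823731/3991680 + x *
    ((-76397291959/41912640) + x * (121869998557/632282112 + x * ((-13871599838267/885194956800) +
    x * (8438214845521/8261819596800 + x * ((-735356223455099/13384147746816000) + x *
    (11372747184581/4562777640960000 + x * ((-1712726361719521/17667075025797120000) + x *
    (291582251364234157/89042058130017484800000 + x * ((-829544667328759/8548037580481678540800) +
    x * (1109225349957341/436124366351106048000000 + x *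
    ((-507016157690663/8548037580481678540800000) + x *
    (4395151199729857543/3554274025964281937264640000000 + x *
    ((-493097459385237881/21325644155785691623587840000000) + x *
    (33144581442595453/85302576623142766494351360000000 + x *
    ((-250472153501099/42651288311571383247175680000000) + x *
    (105017111228047/1316096896471345540198563840000000 + x *
    ((-3697717514038633/3800229788561010247323353088000000000) + x *
    (193608012691171/18241102985092849187152094822400000000 + x *
    ((-22555890803189/218893235821114190245825137868800000000) + x *
    (4643565098857/5253437659706740565899803308851200000000 + x *
    ((-1044854366551/157603129791202216976994099265536000000000) + x *
    (891184096427/20803613132438692640963221103050752000000000 + x *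
    ((-8513/36482205970185698374304189644800000000) + x *
    (1021/985019561195013856106213120409600000000 + x *
    ((-1/281434160341432530316060891545600000000) + x *
    (1/118202347343401662732745574449152000000000 + x *
    ((-1/93616259095974116884334494963728384000000000))))))))))))))))))))))))))))))

theorem pfb2_num_oneSubCosTaylor (x : ℝ) :
    x * pfb2P.eval (oneSubCosTaylor x) + pfb2Q.eval (oneSubCosTaylor x) = x ^ 7 * pfb2Quot x := by
  simp only [pfb2P, pfb2Q, oneSubCosTaylor, pfb2Quot, eval_add, eval_sub, eval_mul, eval_C,
    eval_X, eval_pow]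
  ring

theorem tendsto_one_sub_cos_sub_oneSubCosTaylor_div :
    Tendsto (fun v => (1 - cos v - oneSubCosTaylor (v ^ 2)) / v ^ 14) (𝓝[≠] 0)
      (𝓝 (1 / (14 ! : ℝ))) := by
  convert (tendsto_cos_sub_taylor_div_pow 7).neg using 1
  · ext v
    rw [oneSubCosTaylor_sq]
    ring
  · norm_num

theorem pfb2_num_eq_slope (x w : ℝ) :
    x * pfb2P.eval w + pfb2Q.eval w = x ^ 7 * pfb2Quot x + (w - oneSubCosTaylor x) *
      (x * slope (pfb2P.eval ·) (oneSubCosTaylor x) w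
        + slope (pfb2Q.eval ·) (oneSubCosTaylor x) w) := by
  have hP := sub_smul_slope (pfb2P.eval ·) (oneSubCosTaylor x) w
  have hQ := sub_smul_slope (pfb2Q.eval ·) (oneSubCosTaylor x) w
  simp only [smul_eq_mul, vsub_eq_sub] at hP hQ
  linear_combination pfb2_num_oneSubCosTaylor x - x * hP - hQ

theorem tendsto_pfb2_add_div_sq :
    Tendsto (fun v => (pfb2 v + 114798419 / 26611200) / v ^ 2) (𝓝[≠] 0)
      (𝓝 (16301796103 / 29059430400)) := by
  set w : ℝ → ℝ := fun v => 1 - cos v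
  set ω : ℝ → ℝ := fun v => oneSubCosTaylor (v ^ 2)
  set T : ℝ → ℝ := fun v => (w v - ω v) / v ^ 14
  have hT : Tendsto T (𝓝[≠] 0) (𝓝 (1 / 14 !)) := tendsto_one_sub_cos_sub_oneSubCosTaylor_div
  have hw0 : Tendsto w (𝓝[≠] 0) (𝓝 0) := by
    simpa [w] using ((continuous_cos.tendsto 0).const_sub 1).mono_left nhdsWithin_le_nhds
  have hω0 : Tendsto ω (𝓝[≠] 0) (𝓝 0) := by
    have hc : Continuous ω := by simp only [ω, oneSubCosTaylor]; fun_prop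
    simpa [ω, oneSubCosTaylor] using (hc.tendsto 0).mono_left nhdsWithin_le_nhds
  have hne : ∀ᶠ v in 𝓝[≠] 0, ω v ≠ w v := by
    filter_upwards [hT.eventually_ne (by positivity)] with v hv hωw
    simp [T, hωw] at hv
  have hP := (pfb2P.hasStrictDerivAt 0).tendsto_slope_comp hω0 hw0 hne
  have hQ := (pfb2Q.hasStrictDerivAt 0).tendsto_slope_comp hω0 hw0 hne
  have hsq : Tendsto (fun v : ℝ => v ^ 2) (𝓝[≠] 0) (𝓝 0) := by
    simpa using ((continuous_pow 2).tendsto (0 : ℝ)).mono_left nhdsWithin_le_nhds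
  have hS : Tendsto (fun v => pfb2Quot (v ^ 2)) (𝓝[≠] 0) (𝓝 (pfb2Quot 0)) :=
    ((by unfold pfb2Quot; fun_prop : Continuous pfb2Quot).tendsto 0).comp hsq
  have hlim := (hS.add (hT.mul ((hsq.mul hP).add hQ))).div
    (tendsto_const_nhds (x := (6451200 : ℝ)).mul (tendsto_one_sub_cos_div_sq.pow 5))
    (by norm_num)
  convert hlim.congr' ?_ using 2
  · norm_num [pfb2Quot, pfb2P, pfb2Q, Nat.factorial]
  · filter_upwards [self_mem_nhdsWithin,
      tendsto_one_sub_cos_div_sq.eventually_ne (show (1 / 2 : ℝ) ≠ 0 by norm_num)]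
      with v (hv : v ≠ 0) hwv
    have hwv : 1 - cos v ≠ 0 := by simpa [hv] using hwv
    simp only [Pi.div_apply, T, w, ω]
    rw [pfb2_add_eq (sub_ne_zero.1 hwv).symm, pfb2_num_eq_slope]
    field_simp

/-- The PF-D0 coefficient `pfb2` tends to the corresponding classical
Quinlan–Tremaine coefficient as `v → 0⁺`, with the stated `v²`-Taylor coefficient. -/
theorem pfd0_b2_limit :
    Tendsto pfb2 (nhdsWithin 0 (Set.Ioi 0)) (nhds (-114798419 / 26611200)) ∧
    Tendsto (fun v : ℝ => (pfb2 v - (-114798419 / 26611200)) / v ^ 2)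
      (nhdsWithin 0 (Set.Ioi 0)) (nhds (16301796103 / 29059430400)) := by
  have hquot := tendsto_pfb2_add_div_sq.mono_left
    (nhdsWithin_mono 0 fun v (hv : v ∈ Set.Ioi 0) => ne_of_gt hv)
  have hsq : Tendsto (fun v : ℝ => v ^ 2) (𝓝[>] 0) (𝓝 0) := by
    simpa using ((continuous_pow 2).tendsto (0 : ℝ)).mono_left nhdsWithin_le_nhds
  refine ⟨?_, by simpa [neg_div] using hquot⟩
  have h := (hsq.mul hquot).add_const (-114798419 / 26611200 : ℝ)
  rw [zero_mul, zero_add] at h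
  refine h.congr' (eventually_nhdsWithin_of_forall fun v (hv : 0 < v) => ?_)
  field_simp
  ring
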